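/- arXiv:2511.04272 — 2 statements merged into one kernel-verified Lean document; each statement's English description precedes it below -/
import Mathlib

section
/- For α ∈ (0,1), λ₁ = ε ∈ (0,1) and λ₂ = 1, consider the round-two Bell value 2·√(α(1-α)·(1+√(1-ε²))² + 1 - ε²); then for every α ∈ (0,1) there exists ε₀ > 0 such that for all ε ∈ (0, ε₀), 2·√(α(1-α)(1+√(1-ε²))² + 1 - ε²) > 2. -/
theorem bell_round_two_near_maximal (α : ℝ) (hα : 0 < α ∧ α < 1) :
    ∃ ε₀ > 0, ∀ ε : ℝ, 0 < ε → ε < ε₀ →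
      2 * Real.sqrt (α * (1 - α) * (1 + Real.sqrt (1 - ε ^ 2)) ^ 2 + 1 - ε ^ 2) > 2 := by
  obtain ⟨h0, h1⟩ := hα
  have ha : 0 < α * (1 - α) := by nlinarith
  refine ⟨min 1 (Real.sqrt (α * (1 - α))), lt_min one_pos (Real.sqrt_pos.mpr ha), ?_⟩
  intro ε hε hεlt
  have hε1 : ε < 1 := lt_of_lt_of_le hεlt (min_le_left _ _)
  have hεs : ε < Real.sqrt (α * (1 - α)) := lt_of_lt_of_le hεlt (min_le_right _ _)
  have hε2 : ε ^ 2 < α * (1 - α) := (Real.lt_sqrt hε.le).mp hεs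
  have hs : 0 ≤ Real.sqrt (1 - ε ^ 2) := Real.sqrt_nonneg _
  have h4 : (1:ℝ) ≤ (1 + Real.sqrt (1 - ε ^ 2)) ^ 2 := by nlinarith
  have hX : 1 < α * (1 - α) * (1 + Real.sqrt (1 - ε ^ 2)) ^ 2 + 1 - ε ^ 2 := by
    nlinarith
  have : 1 < Real.sqrt (α * (1 - α) * (1 + Real.sqrt (1 - ε ^ 2)) ^ 2 + 1 - ε ^ 2) :=
    (Real.lt_sqrt zero_le_one).mpr (by nlinarith)
  linarith
end

section
/- Let k > m ≥ 1 be integers, α ∈ (0,1), and q ≥ √(2/(α(1-α))). Then 4α(1-α)·[∏_{i=1}^{m-1} (1+√(1-q^{-2(k-i)}))/2]² · q^{-2(k-m)} + ∏_{i=1}^{m-1}(1 - q^{-2(k-i)}) ≥ 1. -/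
/-!
Write `r = q⁻²`, `t = r ^ (k - m)` and `c = 4α(1 - α) ≤ 1`; the hypothesis on `q` says `8r ≤ c`.
Since `(1 + √(1 - x)) / 2 ≥ √(1 - x)`, the squared product `P²` dominates `Q = ∏ (1 - r ^ (k - i))`,
and by the Weierstrass product inequality `Q ≥ 1 - ∑ r ^ (k - i)`, where the sum is a geometric
tail bounded by `t r / (1 - r)`. Hence `c P² t + Q ≥ Q (1 + c t) ≥ (1 - t r / (1 - r)) (1 + c t)`,
and the last product is at least `1` as soon as `3r ≤ c`.
-/

open Finset

theorem Finset.one_sub_sum_le_prod_one_sub {ι R : Type*} [CommRing R] [PartialOrder R]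
    [IsOrderedRing R] (s : Finset ι) {x : ι → R} (h0 : ∀ i ∈ s, 0 ≤ x i)
    (h1 : ∀ i ∈ s, x i ≤ 1) : 1 - ∑ i ∈ s, x i ≤ ∏ i ∈ s, (1 - x i) := by
  classical
  induction s using Finset.induction_on with
  | empty => simp
  | insert a s ha ih =>
    simp only [mem_insert, forall_eq_or_imp] at h0 h1
    rw [sum_insert ha, prod_insert ha]
    calc 1 - (x a + ∑ i ∈ s, x i)
        ≤ 1 - (x a + ∑ i ∈ s, x i) + x a * ∑ i ∈ s, x i :=
          le_add_of_nonneg_right (mul_nonneg h0.1 (sum_nonneg h0.2))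
      _ = (1 - x a) * (1 - ∑ i ∈ s, x i) := by ring
      _ ≤ (1 - x a) * ∏ i ∈ s, (1 - x i) :=
          mul_le_mul_of_nonneg_left (ih h0.2 h1.2) (sub_nonneg.2 h1.1)

section OrderedField

variable {K : Type*} [Field K] [LinearOrder K] [IsStrictOrderedRing K]

theorem sum_Icc_pow_sub_le {r : K} (hr0 : 0 ≤ r) (hr1 : r < 1) {k m : ℕ} (hmk : m ≤ k + 1) :
    ∑ i ∈ Icc 1 (m - 1), r ^ (k - i) ≤ r ^ (k + 1 - m) / (1 - r) := by
  have hIcc : Icc 1 (m - 1) = Ico 1 m := by ext; simp only [mem_Icc, mem_Ico]; omega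
  calc ∑ i ∈ Icc 1 (m - 1), r ^ (k - i) = ∑ j ∈ Ico (k + 1 - m) k, r ^ j := by
        rw [hIcc, sum_Ico_reflect _ _ hmk, Nat.add_sub_cancel]
    _ ≤ r ^ (k + 1 - m) / (1 - r) := geom_sum_Ico_le_of_lt_one hr0 hr1

theorem one_le_one_sub_mul_one_add {c r t : K} (hr0 : 0 ≤ r) (hr1 : r < 1) (ht0 : 0 ≤ t)
    (ht1 : t ≤ 1) (hrc : 3 * r ≤ c) (hc1 : c ≤ 1) : 1 ≤ (1 - t * r / (1 - r)) * (1 + c * t) := by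
  have key : t * r * (1 + c * t) ≤ c * t * (1 - r) := by
    nlinarith [mul_nonneg ht0 (sub_nonneg.2 hrc), mul_nonneg (mul_nonneg ht0 hr0) (sub_nonneg.2 hc1),
      mul_nonneg (mul_nonneg (mul_nonneg ht0 hr0) (by linarith : 0 ≤ c)) (sub_nonneg.2 ht1)]
  rw [sub_mul, one_mul, div_mul_eq_mul_div, le_sub_iff_add_le, add_le_add_iff_left,
    div_le_iff₀ (sub_pos.2 hr1)]
  exact key

end OrderedField

theorem le_sq_one_add_sqrt_div_two {y : ℝ} (h0 : 0 ≤ y) (h1 : y ≤ 1) :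
    y ≤ ((1 + √y) / 2) ^ 2 := by
  have hs : √y ≤ 1 := Real.sqrt_le_one.2 h1
  nlinarith [Real.sq_sqrt h0, Real.sqrt_nonneg y]

theorem one_le_mul_sq_prod_pow_add_prod {c r : ℝ} {k m : ℕ} (hmk : m ≤ k) (hr0 : 0 ≤ r)
    (hrc : 3 * r ≤ c) (hc1 : c ≤ 1) :
    1 ≤ c * (∏ i ∈ Icc 1 (m - 1), (1 + √(1 - r ^ (k - i))) / 2) ^ 2 * r ^ (k - m) +
      ∏ i ∈ Icc 1 (m - 1), (1 - r ^ (k - i)) := by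
  have hr1 : r < 1 := by linarith
  have hx0 (n : ℕ) : 0 ≤ r ^ n := pow_nonneg hr0 n
  have hx1 (n : ℕ) : r ^ n ≤ 1 := pow_le_one₀ hr0 hr1.le
  set t := r ^ (k - m)
  set P := ∏ i ∈ Icc 1 (m - 1), (1 + √(1 - r ^ (k - i))) / 2
  set Q := ∏ i ∈ Icc 1 (m - 1), (1 - r ^ (k - i))
  have hQP : Q ≤ P ^ 2 := by
    rw [← prod_pow]
    exact prod_le_prod (fun i _ ↦ sub_nonneg.2 (hx1 _))
      (fun i _ ↦ le_sq_one_add_sqrt_div_two (sub_nonneg.2 (hx1 _)) (by linarith [hx0 (k - i)]))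
  have hQ : 1 - t * r / (1 - r) ≤ Q :=
    calc 1 - t * r / (1 - r) = 1 - r ^ (k + 1 - m) / (1 - r) := by
          rw [← pow_succ, Nat.sub_add_comm hmk]
      _ ≤ 1 - ∑ i ∈ Icc 1 (m - 1), r ^ (k - i) := by
          gcongr; exact sum_Icc_pow_sub_le hr0 hr1 (by omega)
      _ ≤ Q := one_sub_sum_le_prod_one_sub _ (fun i _ ↦ hx0 _) (fun i _ ↦ hx1 _)
  calc 1 ≤ (1 - t * r / (1 - r)) * (1 + c * t) :=
        one_le_one_sub_mul_one_add hr0 hr1 (hx0 _) (hx1 _) hrc hc1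
    _ ≤ Q * (1 + c * t) := by gcongr; nlinarith [hx0 (k - m)]
    _ = c * Q * t + Q := by ring
    _ ≤ c * P ^ 2 * t + Q := by gcongr; linarith [hx0 (k - m)]

theorem geometric_sharpness_inequality_general (k m : ℕ) (α q : ℝ)
    (hkm : m < k) (hα : 0 < α ∧ α < 1)
    (hq : q ≥ Real.sqrt (2 / (α * (1 - α)))) :
    4 * α * (1 - α) *
        (∏ i ∈ Finset.Icc 1 (m - 1), (1 + Real.sqrt (1 - (q ^ (2 * (k - i)))⁻¹)) / 2) ^ 2 *
        (q ^ (2 * (k - m)))⁻¹ +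
      ∏ i ∈ Finset.Icc 1 (m - 1), (1 - (q ^ (2 * (k - i)))⁻¹) ≥ 1 := by
  obtain ⟨hα0, hα1⟩ := hα
  have hαβ : 0 < α * (1 - α) := mul_pos hα0 (sub_pos.2 hα1)
  have hq2 : 2 ≤ α * (1 - α) * q ^ 2 := by
    rw [ge_iff_le, Real.sqrt_le_iff, div_le_iff₀' hαβ] at hq
    exact hq.2
  have hq2pos : 0 < q ^ 2 := pos_of_mul_pos_right (by linarith) hαβ.le
  simp only [pow_mul, ← inv_pow]
  refine one_le_mul_sq_prod_pow_add_prod hkm.le (by positivity) ?_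
    (by nlinarith [sq_nonneg (2 * α - 1)])
  rw [inv_pow, ← div_eq_mul_inv, div_le_iff₀ hq2pos]
  linarith

theorem geometric_sharpness_inequality (k m : ℕ) (α q : ℝ)
    (hm : 1 ≤ m) (hkm : m < k) (hα : 0 < α ∧ α < 1)
    (hq : q ≥ Real.sqrt (2 / (α * (1 - α)))) :
    4 * α * (1 - α) *
        (∏ i ∈ Finset.Icc 1 (m - 1), (1 + Real.sqrt (1 - (q ^ (2 * (k - i)))⁻¹)) / 2) ^ 2 *
        (q ^ (2 * (k - m)))⁻¹ +
      ∏ i ∈ Finset.Icc 1 (m - 1), (1 - (q ^ (2 * (k - i)))⁻¹) ≥ 1 :=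
  geometric_sharpness_inequality_general k m α q hkm hα hq
end
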